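/- arXiv:1710.02067 — 6 statements merged into one kernel-verified Lean document; each statement's English description precedes it below -/
import Mathlib

section
/- Let C ⊆ F_{q^m}^k be an F_{q^m}-linear vector rank-metric code, and let Γ, Γ' be trace-orthogonal bases of F_{q^m} over F_q (i.e., Trace(γ'_i γ_j) = δ_{ij} where Trace is the field trace from F_{q^m} to F_q). Then Γ'(C⊥) = Γ(C)⊥, where C⊥ is the dual of C with respect to the standard bilinear form on F_{q^m}^k and Γ(C)⊥ is the trace-dual of the matrix code Γ(C). -/
open Matrix Module

section aux
variable {F E : Type*} [Field F] [Field E] [Algebra F E] {m : ℕ}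
variable (Γ Γ' : Basis (Fin m) F E)
variable (horth : ∀ i j : Fin m, Algebra.trace F E (Γ' i * Γ j) = if i = j then 1 else 0)

include horth in
lemma trace_basis_mul (i : Fin m) (y : E) :
    Algebra.trace F E (Γ' i * y) = Γ.repr y i := by
  conv_lhs => rw [← Γ.sum_repr y]
  rw [Finset.mul_sum, map_sum]
  simp only [mul_smul_comm, _root_.map_smul, horth, smul_eq_mul, mul_ite, mul_one, mul_zero,
    Finset.sum_ite_eq, Finset.mem_univ, if_true]

include horth in
lemma trace_mul_eq_sum (x y : E) :
    Algebra.trace F E (x * y) = ∑ j, Γ.repr x j * Γ'.repr y j := by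
  conv_lhs => rw [← Γ'.sum_repr y]
  rw [Finset.mul_sum, map_sum]
  simp only [mul_smul_comm, _root_.map_smul, smul_eq_mul]
  congr 1; ext j
  rw [mul_comm x (Γ' j), trace_basis_mul Γ Γ' horth, mul_comm]

include horth in
lemma eq_zero_of_trace (x : E) (h : ∀ c : E, Algebra.trace F E (c * x) = 0) : x = 0 := by
  refine Γ.ext_elem fun i => ?_
  rw [← trace_basis_mul Γ Γ' horth, h]
  simp
end aux

/-- If `Γ, Γ'` are trace-orthogonal bases of `F_{q^m}/F_q` and `C ⊆ F_{q^m}^k` is an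
`F_{q^m}`-linear code, then `Γ'(C⊥) = Γ(C)⊥`. -/
theorem dual_code_expansion (F E : Type*) [Field F] [Fintype F] [Field E] [Algebra F E]
    (k m : ℕ) (Γ Γ' : Basis (Fin m) F E)
    (horth : ∀ i j : Fin m, Algebra.trace F E (Γ' i * Γ j) = if i = j then 1 else 0)
    (C : Submodule E (Fin k → E)) :
    (fun (w : Fin k → E) => (Matrix.of fun i j => Γ'.repr (w i) j : Matrix (Fin k) (Fin m) F)) ''
        {w | ∀ v ∈ C, ∑ i, v i * w i = 0} =
      {N : Matrix (Fin k) (Fin m) F |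
        ∀ M ∈ (fun (v : Fin k → E) =>
            (Matrix.of fun i j => Γ.repr (v i) j : Matrix (Fin k) (Fin m) F)) ''
            (C : Set (Fin k → E)),
          (M * Nᵀ).trace = 0} := by
  have key : ∀ v w : Fin k → E,
      ((Matrix.of fun i j => Γ.repr (v i) j : Matrix (Fin k) (Fin m) F) *
        (Matrix.of fun i j => Γ'.repr (w i) j : Matrix (Fin k) (Fin m) F)ᵀ).trace
      = Algebra.trace F E (∑ i, v i * w i) := by
    intro v w
    rw [map_sum, Matrix.trace]
    congr 1; ext i
    rw [trace_mul_eq_sum Γ Γ' horth]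
    simp [Matrix.diag, Matrix.mul_apply]
  ext N
  simp only [Set.mem_image, Set.mem_setOf_eq]
  constructor
  · rintro ⟨w, hw, rfl⟩ M ⟨v, hv, rfl⟩
    rw [key, hw v hv, map_zero]
  · intro hN
    set w : Fin k → E := fun i => ∑ j, N i j • Γ' j with hw
    have hNw : (Matrix.of fun i j => Γ'.repr (w i) j : Matrix (Fin k) (Fin m) F) = N := by
      ext i j
      exact congrFun (Γ'.repr_sum_self (N i)) j
    refine ⟨w, ?_, hNw⟩
    intro v hv
    apply eq_zero_of_trace Γ Γ' horth
    intro c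
    have h1 := hN _ ⟨c • v, C.smul_mem c hv, rfl⟩
    rw [← hNw, key] at h1
    rw [Finset.mul_sum]
    rw [← h1]
    congr 1
    exact Finset.sum_congr rfl fun i _ => by simp [mul_assoc]
end

section
/- For an F_q-subspace U ⊆ F_q^k, the trace-dual of the space of k×m matrices with column space contained in U is the space of k×m matrices with column space contained in U⊥: Mat(k,m,F_q)(U)⊥ = Mat(k,m,F_q)(U⊥). -/
/-!
Columnwise, `tr (M Nᵀ) = ∑ⱼ ⟨Mⱼ, Nⱼ⟩`, and the columns of a matrix with column space in `U`
range independently over `U`. Testing against matrices with a single nonzero column shows that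
the sum vanishes for all of them exactly when every column of `N` is orthogonal to `U`.
-/

open Matrix

theorem Matrix.span_range_le_iff {R ι κ : Type*} [Semiring R] (A : Matrix ι κ R)
    (p : Submodule R (κ → R)) : Submodule.span R (Set.range A) ≤ p ↔ ∀ i, A i ∈ p :=
  Submodule.span_le.trans Set.range_subset_iff

section

variable {R : Type*} [CommSemiring R] {ι κ : Type*} [Fintype ι] [Fintype κ]

theorem Matrix.trace_mul_transpose_eq_sum_dotProduct (M N : Matrix κ ι R) :
    (M * Nᵀ).trace = ∑ j, Mᵀ j ⬝ᵥ Nᵀ j := by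
  simp only [trace, diag, mul_apply, transpose_apply, dotProduct]
  exact Finset.sum_comm

theorem forall_sum_dotProduct_eq_zero_iff (U : Submodule R (κ → R)) (v : ι → κ → R) :
    (∀ u : ι → κ → R, (∀ j, u j ∈ U) → ∑ j, u j ⬝ᵥ v j = 0) ↔
      ∀ j, ∀ y ∈ U, y ⬝ᵥ v j = 0 := by
  classical
  constructor
  · intro h j y hy
    have hsingle : ∀ j', Pi.single (M := fun _ => κ → R) j y j' ∈ U := fun j' => by
      rcases eq_or_ne j' j with rfl | hj
      · simpa using hy
      · simp [hj]
    have hj := h (Pi.single j y) hsingle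
    rwa [Fintype.sum_eq_single j fun j' hj' => by simp [hj'], Pi.single_eq_same] at hj
  · intro h u hu
    exact Finset.sum_eq_zero fun j _ => h j (u j) (hu j)

end

theorem trace_dual_of_colspace_code_general (F : Type*) [Field F] (k m : ℕ)
    (U Uperp : Submodule F (Fin k → F))
    (hUperp : (Uperp : Set (Fin k → F)) = {x | ∀ y ∈ U, ∑ i, x i * y i = 0}) :
    {N : Matrix (Fin k) (Fin m) F |
        ∀ M : Matrix (Fin k) (Fin m) F,
          Submodule.span F (Set.range Mᵀ) ≤ U → (M * Nᵀ).trace = 0} =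
      {N : Matrix (Fin k) (Fin m) F | Submodule.span F (Set.range Nᵀ) ≤ Uperp} := by
  have mem_Uperp (x : Fin k → F) : x ∈ Uperp ↔ ∀ y ∈ U, y ⬝ᵥ x = 0 := by
    rw [← SetLike.mem_coe, hUperp]
    simp only [dotProduct_comm _ x]
    rfl
  ext N
  simp only [Set.mem_ofPred_eq, Matrix.span_range_le_iff, trace_mul_transpose_eq_sum_dotProduct,
    mem_Uperp]
  rw [← forall_sum_dotProduct_eq_zero_iff U Nᵀ]
  exact ⟨fun h u => h uᵀ, fun h M => h Mᵀ⟩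

/-- `Mat(k,m,F_q)(U)⊥ = Mat(k,m,F_q)(U⊥)`: the trace-dual of the space of matrices with
column space in `U` is the space of matrices with column space in `U⊥`. -/
theorem trace_dual_of_colspace_code (F : Type*) [Field F] [Fintype F] (k m : ℕ)
    (U Uperp : Submodule F (Fin k → F))
    (hUperp : (Uperp : Set (Fin k → F)) = {x | ∀ y ∈ U, ∑ i, x i * y i = 0}) :
    {N : Matrix (Fin k) (Fin m) F |
        ∀ M : Matrix (Fin k) (Fin m) F,
          Submodule.span F (Set.range Mᵀ) ≤ U → (M * Nᵀ).trace = 0} =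
      {N : Matrix (Fin k) (Fin m) F | Submodule.span F (Set.range Nᵀ) ≤ Uperp} :=
  trace_dual_of_colspace_code_general F k m U Uperp hUperp
end

section
/- Let C ⊆ Mat(k,m,F_q) be a linear code and U ⊆ F_q^k a subspace of dimension u. Then |C(U)| = |C| · |C⊥(U⊥)| / q^{m(k−u)}, where C(U) = { M ∈ C : colsp(M) ⊆ U }. -/
/-!
Let `V` be the space of `k × m` matrices whose columns lie in `U`. Then `C(U) = C ⊓ V`, and for
the trace form `⟨M, N⟩ = tr (M Nᵀ)` the orthogonal of `V` is the space of matrices whose columns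
lie in `U⊥`, so `C⊥(U⊥) = C⊥ ⊓ V⊥ = (C ⊔ V)⊥`. The trace form is nondegenerate, so
`dim W⊥ = km - dim W`, and Grassmann's formula for `C ⊔ V` becomes
`dim (C ⊓ V) + dim V⊥ = dim C + dim (C⊥ ⊓ V⊥)` with `dim V⊥ = m (k - u)`.
-/

open Matrix Module

open LinearMap (BilinForm)

namespace LinearMap.BilinForm

theorem orthogonal_sup {R M : Type*} [CommSemiring R] [AddCommMonoid M] [Module R M]
    (B : BilinForm R M) (S T : Submodule R M) :
    B.orthogonal (S ⊔ T) = B.orthogonal S ⊓ B.orthogonal T := by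
  ext x
  change S ⊔ T ≤ ker (B.flip x) ↔ S ≤ ker (B.flip x) ∧ T ≤ ker (B.flip x)
  exact sup_le_iff

variable {K V : Type*} [Field K] [AddCommGroup V] [Module K V] [FiniteDimensional K V]
  {B : BilinForm K V}

theorem finrank_inf_add_finrank_orthogonal (hB : B.Nondegenerate) (S T : Submodule K V) :
    finrank K ↥(S ⊓ T) + finrank K (B.orthogonal T) =
      finrank K S + finrank K ↥(B.orthogonal S ⊓ B.orthogonal T) := by
  rw [← orthogonal_sup, finrank_orthogonal hB, finrank_orthogonal hB]
  have := Submodule.finrank_sup_add_finrank_inf_eq S T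
  have := (S ⊔ T).finrank_le
  have := T.finrank_le
  omega

theorem natCard_inf_mul_pow_finrank_orthogonal [Finite K] (hB : B.Nondegenerate)
    (S T : Submodule K V) :
    Nat.card ↥(S ⊓ T) * Nat.card K ^ finrank K (B.orthogonal T) =
      Nat.card S * Nat.card ↥(B.orthogonal S ⊓ B.orthogonal T) := by
  rw [natCard_eq_pow_finrank (K := K) (V := ↥(S ⊓ T)), natCard_eq_pow_finrank (K := K) (V := S),
    natCard_eq_pow_finrank (K := K) (V := ↥(B.orthogonal S ⊓ B.orthogonal T)), ← pow_add, ← pow_add,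
    finrank_inf_add_finrank_orthogonal hB]

end LinearMap.BilinForm

namespace Matrix

open LinearMap.BilinForm

variable {ι κ R : Type*}

section withColumnsIn

variable [CommSemiring R]

variable (κ) in
def withColumnsIn (U : Submodule R (ι → R)) : Submodule R (Matrix ι κ R) where
  carrier := {M | ∀ j, Mᵀ j ∈ U}
  add_mem' hM hN j := U.add_mem (hM j) (hN j)
  zero_mem' _ := U.zero_mem
  smul_mem' c _ hM j := U.smul_mem c (hM j)

theorem mem_withColumnsIn {U : Submodule R (ι → R)} {M : Matrix ι κ R} :
    M ∈ withColumnsIn κ U ↔ ∀ j, Mᵀ j ∈ U :=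
  Iff.rfl

def piEquivWithColumnsIn (U : Submodule R (ι → R)) : (κ → U) ≃ₗ[R] withColumnsIn κ U where
  toFun f := ⟨of fun i j => (f j : ι → R) i, fun j => (f j).2⟩
  invFun M j := ⟨(M : Matrix ι κ R)ᵀ j, M.2 j⟩
  map_add' _ _ := rfl
  map_smul' _ _ := rfl
  left_inv _ := rfl
  right_inv _ := rfl

theorem span_range_transpose_le_iff {U : Submodule R (ι → R)} {M : Matrix ι κ R} :
    Submodule.span R (Set.range Mᵀ) ≤ U ↔ M ∈ withColumnsIn κ U :=
  Submodule.span_le.trans <| (Set.range_subset_iff (f := (Mᵀ : κ → ι → R))).trans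
    mem_withColumnsIn.symm

end withColumnsIn

variable [Fintype ι] [Fintype κ]

section CommSemiring

variable [CommSemiring R]

def traceForm : BilinForm R (Matrix ι κ R) :=
  LinearMap.mk₂ R (fun M N => (M * Nᵀ).trace)
    (fun M M' N => by rw [Matrix.add_mul, trace_add])
    (fun c M N => by rw [Matrix.smul_mul, trace_smul])
    (fun M N N' => by rw [transpose_add, Matrix.mul_add, trace_add])
    (fun c M N => by rw [transpose_smul, Matrix.mul_smul, trace_smul])

theorem traceForm_apply (M N : Matrix ι κ R) : traceForm M N = (M * Nᵀ).trace := rfl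

theorem traceForm_apply_eq_sum_dotProduct (M N : Matrix ι κ R) :
    traceForm M N = ∑ j, Mᵀ j ⬝ᵥ Nᵀ j := by
  simp only [traceForm_apply, trace, diag, mul_apply, dotProduct, transpose_apply]
  exact Finset.sum_comm

theorem traceForm_single_one [DecidableEq ι] [DecidableEq κ] (M : Matrix ι κ R) (i : ι) (j : κ) :
    traceForm M (single i j 1) = M i j := by
  simp [traceForm_apply, transpose_single, trace_mul_single]

theorem traceForm_orthogonal_withColumnsIn [DecidableEq κ] (U : Submodule R (ι → R)) :
    traceForm.orthogonal (withColumnsIn κ U) =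
      withColumnsIn κ (BilinForm.orthogonal (dotProductBilin R R) U) := by
  ext N
  simp only [mem_orthogonal_iff, mem_withColumnsIn, traceForm_apply_eq_sum_dotProduct]
  refine ⟨fun h j y hy => ?_, fun h M hM => Finset.sum_eq_zero fun j _ => h j _ (hM j)⟩
  have hM : ∀ j', (0 : Matrix κ ι R).updateRow j y j' ∈ U := fun j' => by
    rcases eq_or_ne j' j with rfl | hne
    · rwa [updateRow_self]
    · rw [updateRow_ne hne]
      exact U.zero_mem
  have hMN := h ((0 : Matrix κ ι R).updateRow j y)ᵀ hM
  rwa [transpose_transpose, Finset.sum_eq_single j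
    (fun j' _ hne => by rw [updateRow_ne hne]; exact zero_dotProduct _) (by simp),
    updateRow_self] at hMN

end CommSemiring

section CommRing

variable [CommRing R]

theorem traceForm_isRefl : LinearMap.IsRefl (traceForm : BilinForm R (Matrix ι κ R)) := by
  intro M N h
  rwa [traceForm_apply, ← trace_transpose, transpose_mul, transpose_transpose]

theorem traceForm_nondegenerate [DecidableEq ι] [DecidableEq κ] :
    (traceForm : BilinForm R (Matrix ι κ R)).Nondegenerate := by
  refine traceForm_isRefl.nondegenerate_iff_separatingLeft.2 fun M h => ?_
  ext i j
  simpa [traceForm_single_one] using h (single i j 1)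

end CommRing

theorem finrank_withColumnsIn {K : Type*} [Field K] (U : Submodule K (ι → K)) :
    finrank K (withColumnsIn κ U) = Fintype.card κ * finrank K U := by
  rw [← (piEquivWithColumnsIn U).finrank_eq, finrank_pi_fintype, Finset.sum_const,
    Finset.card_univ, smul_eq_mul]

theorem finrank_traceForm_orthogonal_withColumnsIn {K : Type*} [Field K] [DecidableEq ι]
    [DecidableEq κ] (U : Submodule K (ι → K)) :
    finrank K (traceForm.orthogonal (withColumnsIn κ U)) =
      Fintype.card κ * (Fintype.card ι - finrank K U) := by
  rw [finrank_orthogonal traceForm_nondegenerate, finrank_matrix, finrank_self, mul_one,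
    finrank_withColumnsIn, Nat.mul_sub, mul_comm]

end Matrix

/-- For a linear code `C ⊆ Mat(k,m,F_q)` and a subspace `U ⊆ F_q^k` of dimension `u`:
`|C(U)| · q^{m(k-u)} = |C| · |C⊥(U⊥)|`. -/
theorem card_code_restricted_to_subspace (F : Type*) [Field F] [Fintype F] (k m : ℕ)
    (q : ℕ) (hq : q = Fintype.card F)
    (C : Submodule F (Matrix (Fin k) (Fin m) F))
    (U Uperp : Submodule F (Fin k → F)) (u : ℕ) (hu : u = finrank F U)
    (hUperp : (Uperp : Set (Fin k → F)) = {x | ∀ y ∈ U, ∑ i, x i * y i = 0}) :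
    Nat.card {M : Matrix (Fin k) (Fin m) F //
        M ∈ C ∧ Submodule.span F (Set.range Mᵀ) ≤ U} * q ^ (m * (k - u)) =
      Nat.card C *
        Nat.card {N : Matrix (Fin k) (Fin m) F //
          (∀ M ∈ C, (M * Nᵀ).trace = 0) ∧ Submodule.span F (Set.range Nᵀ) ≤ Uperp} := by
  have hUperp' : Uperp = BilinForm.orthogonal (dotProductBilin F F) U := by
    ext x
    rw [← SetLike.mem_coe, hUperp]
    exact forall₂_congr fun y _ => iff_of_eq (congrArg (· = 0) (dotProduct_comm x y))
  have hC : Nat.card {M : Matrix (Fin k) (Fin m) F //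
      M ∈ C ∧ Submodule.span F (Set.range Mᵀ) ≤ U} = Nat.card ↥(C ⊓ withColumnsIn (Fin m) U) :=
    Nat.card_congr <| Equiv.subtypeEquivRight fun M => by
      rw [Submodule.mem_inf, span_range_transpose_le_iff]
  have hCperp : Nat.card {N : Matrix (Fin k) (Fin m) F //
      (∀ M ∈ C, (M * Nᵀ).trace = 0) ∧ Submodule.span F (Set.range Nᵀ) ≤ Uperp} =
      Nat.card ↥(traceForm.orthogonal C ⊓ traceForm.orthogonal (withColumnsIn (Fin m) U)) :=
    Nat.card_congr <| Equiv.subtypeEquivRight fun N => by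
      rw [Submodule.mem_inf, traceForm_orthogonal_withColumnsIn, ← hUperp',
        span_range_transpose_le_iff]
      rfl
  have hdim : finrank F (traceForm.orthogonal (withColumnsIn (Fin m) U)) = m * (k - u) := by
    rw [finrank_traceForm_orthogonal_withColumnsIn, Fintype.card_fin, Fintype.card_fin, hu]
  rw [hC, hCperp, hq, Fintype.card_eq_nat_card, ← hdim]
  exact LinearMap.BilinForm.natCard_inf_mul_pow_finrank_orthogonal traceForm_nondegenerate C _
end

section
/- Singleton-like bound: if C ⊆ Mat(k,m,F_q) with k ≤ m, |C| ≥ 2, and minimum rank distance d, then |C| ≤ q^{m(k−d+1)}. -/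
open Matrix

lemma matrix_eq_zero_of_rank_zero {F : Type*} [Field F] {k m : ℕ}
    (A : Matrix (Fin k) (Fin m) F) (h : A.rank = 0) : A = 0 := by
  have hb : LinearMap.range A.mulVecLin = ⊥ := Submodule.finrank_eq_zero.mp h
  have h2 : A.mulVecLin = 0 := LinearMap.range_eq_bot.mp hb
  ext i j
  have h3 : A.mulVecLin (Pi.single j 1) = 0 := by rw [h2]; rfl
  have h4 := congrFun h3 i
  simpa [Matrix.mulVecLin_apply, Matrix.mulVec_single] using h4

lemma rank_le_of_rows_zero {F : Type*} [Field F] {k m t : ℕ} (h : t ≤ k)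
    (A : Matrix (Fin k) (Fin m) F) (hz : ∀ i : Fin t, ∀ j, A (Fin.castLE h i) j = 0) :
    A.rank ≤ k - t := by
  classical
  set f : ((Fin k → F) →ₗ[F] (Fin t → F)) := LinearMap.funLeft F F (Fin.castLE h)
  have hsurj : Function.Surjective f :=
    LinearMap.funLeft_surjective_of_injective F F _ (Fin.castLE_injective h)
  have hker : Module.finrank F (LinearMap.ker f) = k - t := by
    have h1 := LinearMap.finrank_range_add_finrank_ker f
    have h2 : Module.finrank F (LinearMap.range f) = t := by
      rw [LinearMap.range_eq_top.mpr hsurj]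
      simp [Module.finrank_fintype_fun_eq_card]
    rw [h2] at h1
    have h3 : Module.finrank F (Fin k → F) = k := by
      simp [Module.finrank_fintype_fun_eq_card]
    omega
  have hle : LinearMap.range A.mulVecLin ≤ LinearMap.ker f := by
    rintro v ⟨w, rfl⟩
    ext i
    simp only [f, LinearMap.funLeft_apply, Matrix.mulVecLin_apply, Matrix.mulVec,
      Pi.zero_apply, dotProduct]
    exact Finset.sum_eq_zero fun j _ => by rw [hz i j, zero_mul]
  calc A.rank = Module.finrank F (LinearMap.range A.mulVecLin) := rfl
    _ ≤ Module.finrank F (LinearMap.ker f) := Submodule.finrank_mono hle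
    _ = k - t := hker

/-- Singleton-like bound: a rank-metric code `C ⊆ Mat(k,m,F_q)` with `k ≤ m`, `|C| ≥ 2`
and minimum distance `d` satisfies `|C| ≤ q^{m(k-d+1)}`. -/
theorem singleton_like_bound (F : Type*) [Field F] [Fintype F] (k m : ℕ) (hkm : k ≤ m)
    (q : ℕ) (hq : q = Fintype.card F)
    (C : Set (Matrix (Fin k) (Fin m) F)) (hC : 2 ≤ Nat.card C)
    (d : ℕ) (hd : d = sInf {r : ℕ | ∃ M ∈ C, ∃ N ∈ C, M ≠ N ∧ (M - N).rank = r}) :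
    Nat.card C ≤ q ^ (m * (k + 1 - d)) := by
  classical
  set S : Set ℕ := {r : ℕ | ∃ M ∈ C, ∃ N ∈ C, M ≠ N ∧ (M - N).rank = r} with hS
  -- S is nonempty
  have hnt : Nontrivial C := by
    have hfin : Finite C := Nat.finite_of_card_ne_zero (by omega)
    exact Finite.one_lt_card_iff_nontrivial.mp (by omega)
  obtain ⟨⟨M₀, hM₀⟩, ⟨N₀, hN₀⟩, hne⟩ := hnt
  have hMN : M₀ ≠ N₀ := fun h => hne (by simpa using h)
  have hSne : S.Nonempty := ⟨(M₀ - N₀).rank, M₀, hM₀, N₀, hN₀, hMN, rfl⟩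
  have hd_mem : ∀ r ∈ S, d ≤ r := fun r hr => hd ▸ Nat.sInf_le hr
  have hd_pos : 1 ≤ d := by
    rw [hd]
    refine le_csInf hSne ?_
    rintro r ⟨M, _, N, _, hMN', rfl⟩
    rw [Nat.one_le_iff_ne_zero]
    intro h0
    exact hMN' (sub_eq_zero.mp (matrix_eq_zero_of_rank_zero _ h0))
  have hdk : d ≤ k := by
    rw [hd]
    refine (Nat.sInf_le hSne.some_mem).trans ?_
    obtain ⟨M, _, N, _, _, hr⟩ := hSne.some_mem
    rw [← hr]
    simpa using Matrix.rank_le_card_height (M - N)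
  set t : ℕ := k + 1 - d with ht
  have htk : t ≤ k := by omega
  -- injective truncation map
  set f : C → Matrix (Fin t) (Fin m) F :=
    fun M => (M : Matrix (Fin k) (Fin m) F).submatrix (Fin.castLE htk) id with hf
  have hinj : Function.Injective f := by
    rintro ⟨M, hM⟩ ⟨N, hN⟩ heq
    by_contra hne'
    have hMN' : M ≠ N := fun h => hne' (by simpa using h)
    have hrank : (M - N).rank ≤ k - t := by
      refine rank_le_of_rows_zero htk _ fun i j => ?_
      have : M (Fin.castLE htk i) j = N (Fin.castLE htk i) j :=
        congrFun (congrFun heq i) j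
      simp [Matrix.sub_apply, this]
    have hge : d ≤ (M - N).rank := hd_mem _ ⟨M, hM, N, hN, hMN', rfl⟩
    omega
  have hcard : Nat.card C ≤ Nat.card (Matrix (Fin t) (Fin m) F) :=
    Nat.card_le_card_of_injective f hinj
  have hcodom : Nat.card (Matrix (Fin t) (Fin m) F) = q ^ (m * t) := by
    rw [Nat.card_eq_fintype_card, hq]
    show Fintype.card (Fin t → Fin m → F) = _
    simp [Fintype.card_fun, pow_mul, mul_comm]
  rw [hcodom] at hcard
  exact hcard
end

section
/- For all 1 ≤ d ≤ k ≤ m, there exists an F_{q^m}-linear code C ⊆ F_{q^m}^k of dimension k−d+1 over F_{q^m} whose minimum rank distance equals d; namely, the evaluation of linearized polynomials of q-degree at most k−d at k fixed F_q-linearly independent points of F_{q^m} yields such a code (a Gabidulin code). -/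
/-!
The code is the image of the Moore matrix `(g j ^ q ^ i)`: the codeword of `α` is the vector of
values of the linearized polynomial `L α = ∑ α i X ^ q ^ i` at `F`-linearly independent points
`g 0, …, g (k - 1)`. Since `L α` is `F`-linear, the entries of its codeword span `L α (span g)`,
and for `α ≠ 0` the kernel of `L α` is a space of roots of a polynomial of degree at most `q ^ t`,
hence of dimension at most `t`. So every nonzero codeword has rank at least `k - t`, which also
makes the encoding injective. Conversely, `t` linear conditions on the `t + 1` coefficients produce
a nonzero codeword vanishing in its first `t` coordinates, whose rank is at most `k - t`.
-/

open Module Polynomial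

section LinearizedPolynomial

noncomputable def linearizedPoly {E : Type*} [Semiring E] (q : ℕ) {n : ℕ} (α : Fin n → E) : E[X] :=
  ∑ i : Fin n, C (α i) * X ^ q ^ (i : ℕ)

theorem coeff_linearizedPoly {E : Type*} [Semiring E] {q : ℕ} (hq : 1 < q) {n : ℕ}
    (α : Fin n → E) (i : Fin n) : (linearizedPoly q α).coeff (q ^ (i : ℕ)) = α i := by
  rw [linearizedPoly, finsetSum_coeff, Finset.sum_eq_single i (fun j _ hji => ?_) (by simp)]
  · simp
  · rw [coeff_C_mul, coeff_X_pow,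
      if_neg fun h => hji (Fin.ext (Nat.pow_right_injective hq h).symm), mul_zero]

theorem linearizedPoly_ne_zero {E : Type*} [Semiring E] {q : ℕ} (hq : 1 < q) {n : ℕ}
    {α : Fin n → E} (hα : α ≠ 0) : linearizedPoly q α ≠ 0 :=
  fun h => hα (funext fun i => by simpa [h] using (coeff_linearizedPoly hq α i).symm)

theorem natDegree_linearizedPoly_le {E : Type*} [Semiring E] {q : ℕ} (hq : 0 < q) {t : ℕ}
    (α : Fin (t + 1) → E) : (linearizedPoly q α).natDegree ≤ q ^ t := by
  refine natDegree_sum_le_of_forall_le _ _ fun i _ => natDegree_C_mul_le _ _ |>.trans ?_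
  exact natDegree_X_pow_le _ |>.trans <| Nat.pow_le_pow_right hq (Nat.lt_succ_iff.mp i.2)

variable (F : Type*) {E : Type*} [Field F] [Fintype F] [Field E] [Algebra F E]

noncomputable def linearizedMap {n : ℕ} (α : Fin n → E) : E →ₗ[F] E :=
  ∑ i : Fin n, α i • ((FiniteField.frobeniusAlgHom F E) ^ (i : ℕ)).toLinearMap

theorem linearizedMap_apply {n : ℕ} (α : Fin n → E) (x : E) :
    linearizedMap F α x = ∑ i : Fin n, α i * x ^ Fintype.card F ^ (i : ℕ) := by
  simp [linearizedMap, AlgHom.coe_pow, FiniteField.coe_frobeniusAlgHom, pow_iterate]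

theorem eval_linearizedPoly {n : ℕ} (α : Fin n → E) (x : E) :
    (linearizedPoly (Fintype.card F) α).eval x = linearizedMap F α x := by
  simp [linearizedPoly, linearizedMap_apply, eval_finsetSum]

theorem finrank_le_of_forall_linearizedMap_eq_zero {t : ℕ} {α : Fin (t + 1) → E} (hα : α ≠ 0)
    (V : Submodule F E) [Module.Finite F V] (hV : ∀ x ∈ V, linearizedMap F α x = 0) :
    finrank F V ≤ t := by
  have : Finite V := Module.finite_of_finite F
  set Z := (V : Set E).toFinite.toFinset
  have hZ : Z.val ⊆ (linearizedPoly (Fintype.card F) α).roots := fun x hx => by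
    rw [mem_roots (linearizedPoly_ne_zero Fintype.one_lt_card hα), IsRoot, eval_linearizedPoly]
    exact hV x (by simpa [Z] using hx)
  have hcard : Fintype.card F ^ finrank F V ≤ Fintype.card F ^ t := calc
    Fintype.card F ^ finrank F V = Z.card := by
      rw [← Nat.card_eq_fintype_card, ← natCard_eq_pow_finrank]
      exact Nat.card_eq_card_finite_toFinset _
    _ ≤ (linearizedPoly (Fintype.card F) α).natDegree := card_le_degree_of_subset_roots hZ
    _ ≤ Fintype.card F ^ t := natDegree_linearizedPoly_le Fintype.card_pos α
  exact (Nat.pow_le_pow_iff_right Fintype.one_lt_card).mp hcard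

end LinearizedPolynomial

theorem Submodule.finrank_map_add_finrank_inf_ker {K V W : Type*} [DivisionRing K]
    [AddCommGroup V] [Module K V] [AddCommGroup W] [Module K W] (f : V →ₗ[K] W)
    (U : Submodule K V) [FiniteDimensional K U] :
    finrank K (U.map f) + finrank K ↥(U ⊓ LinearMap.ker f) = finrank K U := by
  rw [← LinearMap.range_domRestrict, ← Submodule.map_comap_subtype,
    Submodule.finrank_map_subtype_eq]
  exact (f.domRestrict U).finrank_range_add_finrank_ker

theorem Set.finrank_range_le_card_ne_zero {K M ι : Type*} [DivisionRing K] [AddCommGroup M]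
    [Module K M] [Fintype ι] [DecidableEq M] (v : ι → M) :
    (Set.range v).finrank K ≤ (Finset.univ.filter fun i => v i ≠ 0).card := by
  set S := (Finset.univ.filter fun i => v i ≠ 0).image v
  have hrange : Set.range v ⊆ insert 0 (S : Set M) := by
    rintro _ ⟨i, rfl⟩
    by_cases hi : v i = 0
    · exact Or.inl hi
    · exact Or.inr (Finset.mem_image_of_mem v (by simpa using hi))
  have hspan : Submodule.span K (Set.range v) ≤ Submodule.span K S :=
    (Submodule.span_mono hrange).trans_eq Submodule.span_insert_zero
  exact (Submodule.finrank_mono hspan).trans <|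
    (finrank_span_finset_le_card S).trans Finset.card_image_le

theorem Fin.card_filter_ne_zero_le {M : Type*} [Zero M] [DecidableEq M] {k t : ℕ}
    (v : Fin k → M) (hv : ∀ j : Fin k, (j : ℕ) < t → v j = 0) :
    (Finset.univ.filter fun j => v j ≠ 0).card ≤ k - t := by
  have hsub : (Finset.univ.filter fun j => v j ≠ 0) ⊆
      Finset.univ.filter fun j : Fin k => ¬ (j : ℕ) < t :=
    fun j hj => by
      simp only [Finset.mem_filter] at hj ⊢
      exact ⟨hj.1, fun h => hj.2 (hv j h)⟩
  have hsplit := Finset.card_filter_add_card_filter_not (s := Finset.univ)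
    fun j : Fin k => (j : ℕ) < t
  rw [Fin.card_filter_val_lt, Finset.card_univ, Fintype.card_fin] at hsplit
  have := Finset.card_le_card hsub
  omega

theorem LinearMap.exists_ne_zero_forall_lt_apply_eq_zero {K : Type*} [DivisionRing K] {t k : ℕ}
    (htk : t ≤ k) (f : (Fin (t + 1) → K) →ₗ[K] (Fin k → K)) :
    ∃ α ≠ 0, ∀ j : Fin k, (j : ℕ) < t → f α j = 0 := by
  have hker : LinearMap.ker (LinearMap.funLeft K K (Fin.castLE htk) ∘ₗ f) ≠ ⊥ :=
    LinearMap.ker_ne_bot_of_finrank_lt (by simp)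
  obtain ⟨α, hα, hα0⟩ := Submodule.exists_mem_ne_zero_of_ne_bot hker
  exact ⟨α, hα0, fun j hj => congrFun hα ⟨j, hj⟩⟩

section Gabidulin

open Matrix

variable (F : Type*) {E ι : Type*} [Field F] [Fintype F] [Field E] [Algebra F E]

def mooreMatrix (q : ℕ) (g : ι → E) (n : ℕ) : Matrix ι (Fin n) E :=
  Matrix.of fun j i => g j ^ q ^ (i : ℕ)

noncomputable def gabidulinCode (q : ℕ) (g : ι → E) (t : ℕ) : Submodule E (ι → E) :=
  LinearMap.range (mooreMatrix q g (t + 1)).mulVecLin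

theorem mooreMatrix_mulVec_apply (g : ι → E) {n : ℕ} (α : Fin n → E) (j : ι) :
    (mooreMatrix (Fintype.card F) g n *ᵥ α) j = linearizedMap F α (g j) := by
  simp [mooreMatrix, Matrix.mulVec, dotProduct, linearizedMap_apply, mul_comm]

variable [Fintype ι] {g : ι → E} {t : ℕ}

theorem card_le_finrank_range_mooreMatrix_mulVec_add (hg : LinearIndependent F g)
    {α : Fin (t + 1) → E} (hα : α ≠ 0) :
    Fintype.card ι ≤ (Set.range (mooreMatrix (Fintype.card F) g (t + 1) *ᵥ α)).finrank F + t := by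
  set U := Submodule.span F (Set.range g)
  have : FiniteDimensional F U := FiniteDimensional.span_of_finite F (Set.finite_range g)
  have hspan : Submodule.span F (Set.range (mooreMatrix (Fintype.card F) g (t + 1) *ᵥ α)) =
      U.map (linearizedMap F α) := by
    rw [Submodule.map_span, ← Set.range_comp]
    exact congrArg _ (congrArg Set.range (funext (mooreMatrix_mulVec_apply F g α)))
  have hker : finrank F ↥(U ⊓ LinearMap.ker (linearizedMap F α)) ≤ t :=
    finrank_le_of_forall_linearizedMap_eq_zero F hα _ fun x hx => hx.2
  have hnullity := Submodule.finrank_map_add_finrank_inf_ker (linearizedMap F α) U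
  rw [finrank_span_eq_card hg] at hnullity
  rw [Set.finrank, hspan]
  omega

theorem mooreMatrix_mulVec_ne_zero (hg : LinearIndependent F g) (ht : t < Fintype.card ι)
    {α : Fin (t + 1) → E} (hα : α ≠ 0) : mooreMatrix (Fintype.card F) g (t + 1) *ᵥ α ≠ 0 := by
  classical
  intro h
  have hrank := card_le_finrank_range_mooreMatrix_mulVec_add F hg hα
  have hzero := Set.finrank_range_le_card_ne_zero (K := F) (0 : ι → E)
  rw [h] at hrank
  simp only [Pi.zero_apply, ne_eq, not_true_eq_false, Finset.filter_false,
    Finset.card_empty] at hzero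
  omega

theorem finrank_gabidulinCode (hg : LinearIndependent F g) (ht : t < Fintype.card ι) :
    finrank E (gabidulinCode (Fintype.card F) g t) = t + 1 := by
  have hinj : Function.Injective (mooreMatrix (Fintype.card F) g (t + 1)).mulVecLin :=
    (injective_iff_map_eq_zero _).2 fun α h =>
      by_contra fun hα => mooreMatrix_mulVec_ne_zero F hg ht hα h
  rw [gabidulinCode, LinearMap.finrank_range_of_inj hinj, finrank_fin_fun]

theorem isLeast_finrank_gabidulinCode {k : ℕ} {g : Fin k → E} (hg : LinearIndependent F g)
    (ht : t < k) :
    IsLeast {r | ∃ v ∈ gabidulinCode (Fintype.card F) g t, v ≠ 0 ∧ (Set.range v).finrank F = r}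
      (k - t) := by
  classical
  constructor
  · obtain ⟨α, hα, hvanish⟩ :=
      (mooreMatrix (Fintype.card F) g (t + 1)).mulVecLin.exists_ne_zero_forall_lt_apply_eq_zero
        ht.le
    have hge := card_le_finrank_range_mooreMatrix_mulVec_add F hg hα
    have hle := (Set.finrank_range_le_card_ne_zero (K := F) _).trans
      (Fin.card_filter_ne_zero_le _ hvanish)
    rw [Fintype.card_fin] at hge
    rw [mulVecLin_apply] at hle
    refine ⟨_, ⟨α, rfl⟩, mooreMatrix_mulVec_ne_zero F hg (by simpa using ht) hα, ?_⟩
    rw [mulVecLin_apply]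
    omega
  · rintro r ⟨_, ⟨α, rfl⟩, hv, rfl⟩
    have hα : α ≠ 0 := by
      rintro rfl
      exact hv (map_zero _)
    have := card_le_finrank_range_mooreMatrix_mulVec_add F hg hα
    rw [Fintype.card_fin] at this
    rw [mulVecLin_apply]
    omega

end Gabidulin

/-- Existence of Gabidulin (MRD) codes: for all `1 ≤ d ≤ k ≤ m` there is an
`F_{q^m}`-linear code `C ⊆ F_{q^m}^k` of dimension `k - d + 1` whose minimum rank
distance equals `d`. -/
theorem exists_gabidulin_code (F E : Type*) [Field F] [Fintype F] [Field E] [Fintype E]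
    [Algebra F E] (k m d : ℕ) (hm : finrank F E = m)
    (hd : 1 ≤ d) (hdk : d ≤ k) (hkm : k ≤ m) :
    ∃ C : Submodule E (Fin k → E),
      finrank E C = k + 1 - d ∧
      sInf {r : ℕ | ∃ v ∈ C, v ≠ 0 ∧
        finrank F (Submodule.span F (Set.range v)) = r} = d := by
  obtain ⟨g, hg⟩ : ∃ g : Fin k → E, LinearIndependent F g :=
    exists_linearIndependent_of_le_rank
      ((Nat.cast_le.mpr (hm ▸ hkm)).trans_eq (finrank_eq_rank F E))
  have ht : k - d < k := by omega
  refine ⟨gabidulinCode (Fintype.card F) g (k - d), ?_, ?_⟩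
  · rw [finrank_gabidulinCode F hg (by simpa using ht)]
    omega
  · exact (isLeast_finrank_gabidulinCode F hg ht).csInf_eq.trans (by omega)
end

section
/- Let C ⊆ Mat(k,m,F_q) (k ≤ m) be an MRD code with |C| ≥ 2 and minimum distance d, i.e., |C| = q^{m(k−d+1)}. Then for every subspace U ⊆ F_q^k of dimension u ≥ d−1, the number of matrices in C with column space contained in U is exactly q^{m(u−d+1)}. -/
/-! Composing with the quotient by a `(d-1)`-dimensional subspace is injective on a family of
linear maps at pairwise rank distance `≥ d` (the Singleton bound); after translating by a member
and restricting the codomain, this bounds a family whose differences all map into `T` by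
`q ^ (dim V * (dim T + 1 - d))`. Now sort the code by the composite `U.mkQ ∘ f` in
`Hom(V, W ⧸ U)`: codewords in one class differ by a map into `U`, so each of the
`q ^ (dim V * (dim W - dim U))` classes has at most `q ^ (dim V * (dim U + 1 - d))` elements.
An MRD code has exactly the product of these two numbers of elements, so every class is full,
in particular the class of `0`, which consists of the codewords with range in `U`. -/

open Matrix Module

section RankMetric

open Finset LinearMap

theorem Finset.card_filter_eq_of_card_eq_mul {α β : Type*} [Fintype β] [DecidableEq β]
    {s : Finset α} {f : α → β} {B : ℕ} (hle : ∀ b, #{a ∈ s | f a = b} ≤ B)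
    (hs : #s = Fintype.card β * B) (b : β) : #{a ∈ s | f a = b} = B := by
  have hsum : ∑ b, #{a ∈ s | f a = b} = ∑ _b : β, B := by
    rw [← card_eq_sum_card_fiberwise fun a _ => mem_univ (f a), hs, sum_const,
      card_univ, smul_eq_mul]
  exact (sum_eq_sum_iff_of_le fun b _ => hle b).mp hsum b (mem_univ b)

variable {F V W : Type*} [Field F] [AddCommGroup V] [Module F V] [AddCommGroup W] [Module F W]

theorem Submodule.exists_finrank_eq {n : ℕ} (hn : n ≤ finrank F W) :
    ∃ W' : Submodule F W, finrank F W' = n := by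
  obtain ⟨b, hb⟩ := exists_linearIndependent_of_le_finrank hn
  exact ⟨Submodule.span F (Set.range b), by rw [finrank_span_eq_card hb, Fintype.card_fin]⟩

theorem Submodule.mkQ_comp_eq_zero_iff {U : Submodule F W} {f : V →ₗ[F] W} :
    U.mkQ ∘ₗ f = 0 ↔ range f ≤ U := by
  rw [← range_le_ker_iff, ker_mkQ]

theorem LinearMap.eq_of_range_sub_le [FiniteDimensional F W] {f g : V →ₗ[F] W} {d : ℕ}
    {W' : Submodule F W} (hW' : finrank F W' = d - 1) (hfg : range (f - g) ≤ W')
    (hd : f ≠ g → d ≤ finrank F (range (f - g))) : f = g := by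
  by_contra hne
  have hpos : finrank F (range (f - g)) ≠ 0 := by
    rwa [ne_eq, Submodule.finrank_eq_zero, range_eq_bot, sub_eq_zero]
  have := Submodule.finrank_mono hfg
  have := hd hne
  omega

variable [Fintype F] [FiniteDimensional F V] [FiniteDimensional F W]

theorem LinearMap.card_le_of_forall_ne_le_finrank_range_sub {S : Finset (V →ₗ[F] W)} {d : ℕ}
    (hd : d - 1 ≤ finrank F W)
    (hS : ∀ f ∈ S, ∀ g ∈ S, f ≠ g → d ≤ finrank F (range (f - g))) :
    #S ≤ Fintype.card F ^ (finrank F V * (finrank F W + 1 - d)) := by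
  classical
  obtain ⟨W', hW'⟩ := Submodule.exists_finrank_eq hd
  have hinj : Set.InjOn (W'.mkQ ∘ₗ ·) S := fun f hf g hg hfg =>
    eq_of_range_sub_le hW'
      (Submodule.mkQ_comp_eq_zero_iff.mp (by rw [comp_sub]; exact sub_eq_zero.mpr hfg))
      (hS f hf g hg)
  have : Finite (V →ₗ[F] W ⧸ W') := Module.finite_of_finite F
  calc #S = #(S.image (W'.mkQ ∘ₗ ·)) := (card_image_of_injOn hinj).symm
    _ ≤ Nat.card (V →ₗ[F] W ⧸ W') := by
        rw [← Nat.card_eq_finsetCard]; exact Finite.card_subtype_le _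
    _ = Fintype.card F ^ (finrank F V * (finrank F W - (d - 1))) := by
        rw [natCard_eq_pow_finrank (K := F), finrank_linearMap F F, Submodule.finrank_quotient,
          hW', Nat.card_eq_fintype_card]
    _ ≤ _ := pow_le_pow_right₀ Fintype.card_pos (Nat.mul_le_mul_left _ (by omega))

theorem LinearMap.card_le_of_forall_range_sub_le {S : Finset (V →ₗ[F] W)} {T : Submodule F W}
    {d : ℕ} (hd : d - 1 ≤ finrank F T) (hT : ∀ f ∈ S, ∀ g ∈ S, range (f - g) ≤ T)
    (hS : ∀ f ∈ S, ∀ g ∈ S, f ≠ g → d ≤ finrank F (range (f - g))) :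
    #S ≤ Fintype.card F ^ (finrank F V * (finrank F T + 1 - d)) := by
  classical
  rcases S.eq_empty_or_nonempty with rfl | ⟨f₀, hf₀⟩
  · simp
  let ψ : S → (V →ₗ[F] T) := fun f =>
    (f.1 - f₀).codRestrict T fun v => hT f.1 f.2 f₀ hf₀ (mem_range_self _ v)
  have hψ (f : S) : T.subtype ∘ₗ ψ f = f.1 - f₀ := subtype_comp_codRestrict _ _ _
  have hψsub (f g : S) : T.subtype ∘ₗ (ψ f - ψ g) = f.1 - g.1 := by
    rw [comp_sub, hψ, hψ, sub_sub_sub_cancel_right]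
  have hψinj : Function.Injective ψ := fun f g hfg =>
    Subtype.ext (sub_eq_zero.mp (by rw [← hψsub, hfg, sub_self, comp_zero]))
  calc #S = #(univ.image ψ) := by
        rw [card_image_of_injective _ hψinj, card_univ, Fintype.card_coe]
    _ ≤ _ := by
      refine card_le_of_forall_ne_le_finrank_range_sub hd ?_
      simp only [mem_image, mem_univ, true_and]
      rintro _ ⟨f, rfl⟩ _ ⟨g, rfl⟩ hne
      rw [← Submodule.finrank_map_subtype_eq, ← range_comp, hψsub]
      exact hS f f.2 g g.2 fun h => hne (congrArg ψ (Subtype.ext h))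

theorem LinearMap.natCard_range_le_of_natCard_eq_singletonBound {C : Set (V →ₗ[F] W)} {d : ℕ}
    (hC : ∀ f ∈ C, ∀ g ∈ C, f ≠ g → d ≤ finrank F (range (f - g)))
    (hcard : Nat.card C = Fintype.card F ^ (finrank F V * (finrank F W + 1 - d)))
    {U : Submodule F W} (hU : d - 1 ≤ finrank F U) :
    Nat.card {f // f ∈ C ∧ range f ≤ U} =
      Fintype.card F ^ (finrank F V * (finrank F U + 1 - d)) := by
  classical
  have : Finite (V →ₗ[F] W) := Module.finite_of_finite F
  have : Finite (V →ₗ[F] W ⧸ U) := Module.finite_of_finite F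
  have : Fintype (V →ₗ[F] W ⧸ U) := Fintype.ofFinite _
  let Cf := C.toFinite.toFinset
  have hfiber : ∀ b, #{f ∈ Cf | U.mkQ ∘ₗ f = b} ≤
      Fintype.card F ^ (finrank F V * (finrank F U + 1 - d)) := by
    intro b
    refine card_le_of_forall_range_sub_le hU (fun f hf g hg => ?_) fun f hf g hg => ?_
    · rw [mem_filter] at hf hg
      exact Submodule.mkQ_comp_eq_zero_iff.mp (by rw [comp_sub, hf.2, hg.2, sub_self])
    · simp only [mem_filter, Cf, Set.Finite.mem_toFinset] at hf hg
      exact hC f hf.1 g hg.1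
  have hCf : #Cf = Fintype.card (V →ₗ[F] W ⧸ U) *
      Fintype.card F ^ (finrank F V * (finrank F U + 1 - d)) := by
    have := U.finrank_le
    rw [← Nat.card_eq_card_finite_toFinset, hcard,
      card_eq_pow_finrank (K := F) (V := V →ₗ[F] W ⧸ U), finrank_linearMap F F,
      Submodule.finrank_quotient, ← pow_add, ← mul_add]
    congr 2
    omega
  rw [← Finset.card_filter_eq_of_card_eq_mul hfiber hCf 0, ← Nat.card_eq_finsetCard]
  exact Nat.card_congr <| Equiv.subtypeEquivRight fun f => by
    simp [Cf, Submodule.mkQ_comp_eq_zero_iff]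

end RankMetric

theorem card_MRD_restricted_to_subspace_general
    (F : Type*) [Field F] [Fintype F] (k m : ℕ)
    (q : ℕ) (hq : q = Fintype.card F)
    (C : Set (Matrix (Fin k) (Fin m) F))
    (d : ℕ) (hd : d = sInf {r : ℕ | ∃ M ∈ C, ∃ N ∈ C, M ≠ N ∧ (M - N).rank = r})
    (hMRD : Nat.card C = q ^ (m * (k + 1 - d)))
    (U : Submodule F (Fin k → F)) (u : ℕ) (hu : u = finrank F U) (hud : d - 1 ≤ u) :
    Nat.card {M : Matrix (Fin k) (Fin m) F //
        M ∈ C ∧ Submodule.span F (Set.range Mᵀ) ≤ U} = q ^ (m * (u + 1 - d)) := by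
  subst hq hu
  have hdist : ∀ f ∈ toLin' '' C, ∀ g ∈ toLin' '' C, f ≠ g →
      d ≤ finrank F (LinearMap.range (f - g)) := by
    rintro _ ⟨M, hM, rfl⟩ _ ⟨N, hN, rfl⟩ hne
    rw [hd, ← map_sub]
    exact Nat.sInf_le ⟨M, hM, N, hN, fun h => hne (h ▸ rfl), rfl⟩
  have hcard : Nat.card (toLin' '' C) =
      Fintype.card F ^ (finrank F (Fin m → F) * (finrank F (Fin k → F) + 1 - d)) := by
    rw [Nat.card_image_of_injective toLin'.injective, hMRD, finrank_fin_fun, finrank_fin_fun]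
  have key := LinearMap.natCard_range_le_of_natCard_eq_singletonBound hdist hcard hud
  rw [finrank_fin_fun] at key
  rw [← key]
  exact Nat.card_congr <| toLin'.toEquiv.subtypeEquiv fun M =>
    and_congr toLin'.injective.mem_set_image.symm
      (by rw [LinearEquiv.coe_toEquiv, range_toLin']; rfl)

/-- For an MRD code `C ⊆ Mat(k,m,F_q)` with minimum distance `d` and any subspace
`U ⊆ F_q^k` with `dim U = u ≥ d - 1`, one has `|C(U)| = q^{m(u-d+1)}`. -/
theorem card_MRD_restricted_to_subspace
    (F : Type*) [Field F] [Fintype F] (k m : ℕ) (hkm : k ≤ m)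
    (q : ℕ) (hq : q = Fintype.card F)
    (C : Set (Matrix (Fin k) (Fin m) F)) (hC : 2 ≤ Nat.card C)
    (d : ℕ) (hd : d = sInf {r : ℕ | ∃ M ∈ C, ∃ N ∈ C, M ≠ N ∧ (M - N).rank = r})
    (hMRD : Nat.card C = q ^ (m * (k + 1 - d)))
    (U : Submodule F (Fin k → F)) (u : ℕ) (hu : u = finrank F U) (hud : d - 1 ≤ u) :
    Nat.card {M : Matrix (Fin k) (Fin m) F //
        M ∈ C ∧ Submodule.span F (Set.range Mᵀ) ≤ U} = q ^ (m * (u + 1 - d)) :=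
  card_MRD_restricted_to_subspace_general F k m q hq C d hd hMRD U u hu hud
end
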